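/- arXiv:2112.06635 — 3 statements merged into one kernel-verified Lean document; each statement's English description precedes it below -/
import Mathlib

section
/- Let C be a Z/p^sZ-submodule of (Z/p^sZ)^n, and for j = 1,...,n let π_j be the j-th coordinate projection. Suppose for each j, π_j(C) = ⟨p^{i_j}⟩ for some i_j, and let n_i be the number of j with i_j = i. Then the average Lee weight of C equals ∑_{i=0}^{s-1} n_i · (average Lee weight of ⟨p^i⟩); in particular for p odd it equals (1/(4p^s))·(p^{2s}(n - n_s) - ∑_{i=0}^{s-1} p^{2i} n_i), and for p = 2 it equals 2^{s-2}(n - n_s). -/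
/-- The Lee weight of an element of `ZMod m`. -/
def leeW (m : ℕ) (a : ZMod m) : ℕ := min a.val (m - a.val)

/-- The Lee weight of a vector over `ZMod m`. -/
def leeWV (m n : ℕ) (x : Fin n → ZMod m) : ℕ := ∑ i, leeW m (x i)

/-!
Projection onto a coordinate is a homomorphism of finite groups, so its fibres over its image are
cosets of the kernel and all have the same size. Hence the average over `C` of the Lee weight of
the `j`-th coordinate is the average Lee weight of the ideal `π_j(C)`, and the average Lee weight
of `C` is the sum of these. The ideals of `ZMod (p ^ s)` are the `⟨p ^ i⟩` with `i ≤ s`, told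
apart by their sizes `p ^ (s - i)`; grouping the coordinates by `i` gives the first formula.
Finally `⟨p ^ i⟩ = p ^ i · {0, …, M - 1}` with `M = p ^ (s - i)`, on which the Lee weight is
`p ^ i * min k (M - k)`, and `4 * ∑_{k < M} min k (M - k) = M ^ 2 - M % 2`.
-/

open Finset

theorem AddMonoidHom.sum_comp_div_card_eq {G N K : Type*} [AddGroup G] [Fintype G]
    [AddMonoid N] [DecidableEq N] [Semifield K] [CharZero K] (f : G →+ N) (g : N → K) :
    (∑ x, g (f x)) / Fintype.card G = (∑ y ∈ univ.image f, g y) / #(univ.image f) := by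
  have hfiber : ∀ y ∈ univ.image f, #{x | f x = y} = #{x | f x = 0} := by
    intro y hy
    obtain ⟨x, -, rfl⟩ := mem_image.1 hy
    exact card_fiber_eq_of_mem_range f ⟨x, rfl⟩ ⟨0, map_zero f⟩
  have hsum : ∀ h : N → K, ∑ x, h (f x) = #{x | f x = 0} * ∑ y ∈ univ.image f, h y := by
    intro h
    rw [sum_comp, mul_sum]
    exact sum_congr rfl fun y hy => by rw [hfiber y hy, nsmul_eq_mul]
  have hcard : (Fintype.card G : K) = #{x | f x = 0} * #(univ.image f) := by
    simpa using hsum fun _ => 1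
  have hker : (#{x | f x = 0} : K) ≠ 0 :=
    Nat.cast_ne_zero.2 (card_pos.2 ⟨0, by simp⟩).ne'
  rw [hsum g, hcard, mul_div_mul_left _ _ hker]

theorem Submodule.sum_comp_div_card_eq {R M N K : Type*} [Ring R] [AddCommGroup M] [Module R M]
    [Fintype M] [AddCommGroup N] [Module R N] [Fintype N] [Semifield K] [CharZero K]
    (C : Submodule R M) (f : M →ₗ[R] N) [DecidablePred (· ∈ C)] [DecidablePred (· ∈ C.map f)]
    (g : N → K) :
    (∑ x ∈ univ.filter (· ∈ C), g (f x)) / Nat.card C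
      = (∑ y ∈ univ.filter (· ∈ C.map f), g y) / Nat.card (C.map f) := by
  classical
  have himage : univ.image (f.comp C.subtype) = univ.filter (· ∈ C.map f) := by
    ext y
    simp [Submodule.mem_map]
  have h := (f.comp C.subtype).toAddMonoidHom.sum_comp_div_card_eq g
  simp only [LinearMap.toAddMonoidHom_coe, himage] at h
  rw [sum_subtype (p := (· ∈ C)) _ (by simp), Nat.card_eq_fintype_card, Nat.card_eq_fintype_card]
  simpa only [Fintype.card_subtype, LinearMap.comp_apply, Submodule.subtype_apply] using h

theorem Finset.sum_comp_eq_sum_range_card_fiber {ι R : Type*} [Fintype ι] [AddCommMonoid R]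
    {N : ℕ} (e : ι → ℕ) (he : ∀ j, e j < N) (g : ℕ → R) :
    ∑ j, g (e j) = ∑ i ∈ range N, #{j | e j = i} • g i := by
  rw [← sum_fiberwise_of_maps_to fun j _ => mem_range.2 (he j)]
  refine sum_congr rfl fun i _ => ?_
  rw [sum_congr rfl fun j hj => by rw [(mem_filter.1 hj).2], sum_const]

namespace ZMod

theorem exists_dvd_eq_span_natCast (m : ℕ) (I : Ideal (ZMod m)) :
    ∃ d, d ∣ m ∧ I = Ideal.span {(d : ZMod m)} := by
  obtain ⟨a, ha⟩ : ∃ a : ℤ, I.comap (Int.castRingHom (ZMod m)) = Ideal.span {a} :=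
    (IsPrincipalIdealRing.principal _).principal
  have hm : (m : ℤ) ∈ I.comap (Int.castRingHom (ZMod m)) := by simp
  rw [ha, Ideal.mem_span_singleton] at hm
  refine ⟨a.natAbs, by simpa using Int.natAbs_dvd_natAbs.2 hm, ?_⟩
  rw [← Ideal.map_comap_of_surjective (Int.castRingHom (ZMod m)) intCast_surjective I, ha,
    ← Int.span_natAbs, Ideal.map_span, Set.image_singleton]
  simp

theorem exists_le_eq_span_pow {p : ℕ} (hp : p.Prime) (s : ℕ) (I : Ideal (ZMod (p ^ s))) :
    ∃ i ≤ s, I = Ideal.span {(p : ZMod (p ^ s)) ^ i} := by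
  obtain ⟨d, hd, rfl⟩ := exists_dvd_eq_span_natCast _ I
  obtain ⟨i, hi, rfl⟩ := (Nat.dvd_prime_pow hp).1 hd
  exact ⟨i, hi, by push_cast; rfl⟩

variable {m d M : ℕ} [NeZero m]

theorem mem_span_natCast_iff_dvd_val (hd : d ∣ m) (a : ZMod m) :
    a ∈ Ideal.span {(d : ZMod m)} ↔ d ∣ a.val := by
  rw [Ideal.mem_span_singleton']
  constructor
  · rintro ⟨c, rfl⟩
    rw [val_mul, val_natCast, Nat.dvd_mod_iff hd]
    exact Dvd.dvd.mul_left ((Nat.dvd_mod_iff hd).2 dvd_rfl) _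
  · rintro ⟨k, hk⟩
    exact ⟨k, by rw [← natCast_zmod_val a, hk, Nat.cast_mul, mul_comm]⟩

theorem sum_filter_mem_span_natCast {β : Type*} [AddCommMonoid β] (h : m = d * M)
    [DecidablePred (· ∈ Ideal.span {(d : ZMod m)})] (f : ZMod m → β) :
    ∑ a ∈ univ.filter (· ∈ Ideal.span {(d : ZMod m)}), f a
      = ∑ k ∈ range M, f ((d * k : ℕ) : ZMod m) := by
  have hd : d ∣ m := ⟨M, h⟩
  have hpos : 0 < d := Nat.pos_of_ne_zero (left_ne_zero_of_mul (h ▸ NeZero.ne m))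
  have hval : ∀ k < M, ((d * k : ℕ) : ZMod m).val = d * k := fun k hk =>
    val_cast_of_lt (h ▸ Nat.mul_lt_mul_of_pos_left hk hpos)
  rw [← sum_image (s := range M) (g := fun k : ℕ => ((d * k : ℕ) : ZMod m))
    fun k hk l hl hkl => ?_]
  · congr 1
    ext a
    simp only [mem_filter, mem_univ, true_and, mem_image, mem_range,
      mem_span_natCast_iff_dvd_val hd]
    constructor
    · rintro ⟨k, hk⟩
      refine ⟨k, ?_, by rw [← hk, natCast_zmod_val]⟩
      have : d * k < d * M := by rw [← hk, ← h]; exact a.val_lt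
      exact Nat.lt_of_mul_lt_mul_left this
    · rintro ⟨k, hk, rfl⟩
      exact ⟨k, hval k hk⟩
  · have := congrArg val hkl
    rw [hval k (mem_range.1 hk), hval l (mem_range.1 hl)] at this
    exact Nat.eq_of_mul_eq_mul_left hpos this

theorem card_span_natCast (h : m = d * M) : Nat.card (Ideal.span {(d : ZMod m)}) = M := by
  classical
  rw [Nat.card_eq_fintype_card, Fintype.card_subtype, card_eq_sum_ones,
    sum_filter_mem_span_natCast h, sum_const, card_range, smul_eq_mul, mul_one]

theorem card_span_pow {p s i : ℕ} [NeZero (p ^ s)] (hi : i ≤ s) :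
    Nat.card (Ideal.span {(p : ZMod (p ^ s)) ^ i}) = p ^ (s - i) := by
  rw [← Nat.cast_pow, card_span_natCast (by rw [← pow_add, Nat.add_sub_cancel' hi])]

theorem span_pow_injective {p s i j : ℕ} (hp : p.Prime) (hi : i ≤ s) (hj : j ≤ s)
    (h : Ideal.span {(p : ZMod (p ^ s)) ^ i} = Ideal.span {(p : ZMod (p ^ s)) ^ j}) : i = j := by
  have : NeZero (p ^ s) := ⟨pow_ne_zero _ hp.ne_zero⟩
  have := Nat.pow_right_injective hp.two_le ((card_span_pow hi).symm.trans (h ▸ card_span_pow hj))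
  omega

end ZMod

theorem leeW_natCast_mul {m d M k : ℕ} [NeZero m] (h : m = d * M) (hk : k < M) :
    leeW m ((d * k : ℕ) : ZMod m) = d * min k (M - k) := by
  have hpos : 0 < d := Nat.pos_of_ne_zero (left_ne_zero_of_mul (h ▸ NeZero.ne m))
  rw [leeW, ZMod.val_cast_of_lt (h ▸ Nat.mul_lt_mul_of_pos_left hk hpos), h, ← Nat.mul_sub,
    Nat.mul_min_mul_left]

theorem four_mul_sum_min_add_mod_two (M : ℕ) :
    4 * ∑ k ∈ range M, min k (M - k) + M % 2 = M ^ 2 := by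
  induction M using Nat.twoStepInduction with
  | zero => simp
  | one => simp
  | more M ih _ =>
    have hstep : ∑ k ∈ range (M + 2), min k (M + 2 - k)
        = ∑ k ∈ range M, min k (M - k) + (M + 1) := by
      have hshift : ∀ k ∈ range M, min (k + 1) (M + 2 - (k + 1)) = min k (M - k) + 1 :=
        fun k hk => by have := mem_range.1 hk; omega
      rw [sum_range_succ' _ (M + 1), sum_range_succ _ M, sum_congr rfl hshift, sum_add_distrib,
        sum_const, card_range, smul_eq_mul, mul_one]
      omega
    rw [hstep, Nat.add_mod_right]
    nlinarith [ih]

theorem sum_leeW_span_natCast_div {m d M : ℕ} [NeZero m] (h : m = d * M)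
    [DecidablePred (· ∈ Ideal.span {(d : ZMod m)})] :
    (∑ a ∈ univ.filter (· ∈ Ideal.span {(d : ZMod m)}), (leeW m a : ℚ)) / M
      = ((m : ℚ) ^ 2 - (d : ℚ) ^ 2 * (M % 2 : ℕ)) / (4 * m) := by
  rw [← Nat.cast_sum, ZMod.sum_filter_mem_span_natCast h,
    sum_congr rfl fun k hk => leeW_natCast_mul h (mem_range.1 hk), ← mul_sum]
  have hT : 4 * (∑ k ∈ range M, min k (M - k) : ℕ) + (M % 2 : ℕ) = (M : ℚ) ^ 2 := by
    exact_mod_cast four_mul_sum_min_add_mod_two M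
  generalize ∑ k ∈ range M, min k (M - k) = T at hT ⊢
  have hm : (m : ℚ) ≠ 0 := Nat.cast_ne_zero.2 (NeZero.ne m)
  rw [h] at hm ⊢
  push_cast at hm ⊢
  have hd : (d : ℚ) ≠ 0 := left_ne_zero_of_mul hm
  have hM : (M : ℚ) ≠ 0 := right_ne_zero_of_mul hm
  field_simp
  linear_combination hT

theorem sum_leeW_span_pow_div {p s i : ℕ} [NeZero (p ^ s)] (hi : i ≤ s)
    [DecidablePred (· ∈ Ideal.span {(p : ZMod (p ^ s)) ^ i})] :
    (∑ a ∈ univ.filter (· ∈ Ideal.span {(p : ZMod (p ^ s)) ^ i}), (leeW (p ^ s) a : ℚ))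
        / (p : ℚ) ^ (s - i)
      = ((p : ℚ) ^ (2 * s) - (p : ℚ) ^ (2 * i) * (p ^ (s - i) % 2 : ℕ)) / (4 * p ^ s) := by
  classical
  have h := sum_leeW_span_natCast_div (M := p ^ (s - i))
    (by rw [← pow_add, Nat.add_sub_cancel' hi] : p ^ s = p ^ i * p ^ (s - i))
  push_cast at h
  rw [pow_mul', pow_mul']
  convert h

theorem sum_leeWV_div_card_eq_sum_proj {m n : ℕ} [NeZero m]
    (C : Submodule (ZMod m) (Fin n → ZMod m)) [DecidablePred (· ∈ C)]
    [∀ j : Fin n, DecidablePred (· ∈ C.map (LinearMap.proj j))] :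
    (∑ c ∈ univ.filter (· ∈ C), (leeWV m n c : ℚ)) / Nat.card C
      = ∑ j, (∑ a ∈ univ.filter (· ∈ C.map (LinearMap.proj j)), (leeW m a : ℚ))
          / Nat.card (C.map (LinearMap.proj j)) := by
  simp only [leeWV, Nat.cast_sum]
  rw [sum_comm, sum_div]
  exact sum_congr rfl fun j _ => C.sum_comp_div_card_eq (LinearMap.proj j) fun a => (leeW m a : ℚ)

open scoped Classical in
theorem sum_map_proj_eq_sum_range_nsmul {R : Type*} [AddCommMonoid R] {p s n : ℕ}
    (hp : p.Prime) (C : Submodule (ZMod (p ^ s)) (Fin n → ZMod (p ^ s))) {nF : ℕ → ℕ}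
    (hn : ∀ i, nF i = #{j | C.map (LinearMap.proj j)
      = Submodule.span (ZMod (p ^ s)) {(p : ZMod (p ^ s)) ^ i}})
    (F : Ideal (ZMod (p ^ s)) → R) :
    ∑ j, F (C.map (LinearMap.proj j))
      = ∑ i ∈ range (s + 1), nF i • F (Ideal.span {(p : ZMod (p ^ s)) ^ i}) := by
  choose e he_le he using fun j : Fin n =>
    ZMod.exists_le_eq_span_pow hp s (C.map (LinearMap.proj j))
  rw [sum_congr rfl fun j _ => by rw [he j],
    sum_comp_eq_sum_range_card_fiber e (fun j => Nat.lt_succ_of_le (he_le j))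
      fun i => F (Ideal.span {(p : ZMod (p ^ s)) ^ i})]
  refine sum_congr rfl fun i hi => ?_
  rw [hn]
  congr 2
  ext j
  simp only [mem_filter, mem_univ, true_and]
  rw [he j]
  exact ⟨fun h => h ▸ rfl,
    ZMod.span_pow_injective hp (he_le j) (Nat.le_of_lt_succ (mem_range.1 hi))⟩

open scoped Classical in
theorem sum_leeWV_div_card_eq_sum_range {p s n : ℕ} (hp : p.Prime) [NeZero (p ^ s)]
    (C : Submodule (ZMod (p ^ s)) (Fin n → ZMod (p ^ s))) {nF : ℕ → ℕ}
    (hn : ∀ i, nF i = #{j | C.map (LinearMap.proj j)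
      = Submodule.span (ZMod (p ^ s)) {(p : ZMod (p ^ s)) ^ i}}) :
    (∑ c ∈ univ.filter (· ∈ C), (leeWV (p ^ s) n c : ℚ)) / Nat.card C
      = ∑ i ∈ range s, (nF i : ℚ) *
          ((∑ a ∈ univ.filter (· ∈ Ideal.span {(p : ZMod (p ^ s)) ^ i}), (leeW (p ^ s) a : ℚ))
            / (p : ℚ) ^ (s - i)) := by
  rw [sum_leeWV_div_card_eq_sum_proj, sum_map_proj_eq_sum_range_nsmul hp C hn fun D =>
    (∑ a ∈ univ.filter (· ∈ D), (leeW (p ^ s) a : ℚ)) / Nat.card D, sum_range_succ,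
    ZMod.card_span_pow le_rfl]
  push_cast
  rw [sum_leeW_span_pow_div le_rfl]
  simp only [Nat.sub_self, pow_zero, Nat.one_mod, Nat.cast_one, mul_one, sub_self, zero_div,
    smul_zero, add_zero]
  refine sum_congr rfl fun i hi => ?_
  rw [nsmul_eq_mul, ZMod.card_span_pow (mem_range.1 hi).le]
  push_cast
  rfl

open scoped Classical in
theorem average_lee_weight_code_general (p s n : ℕ) (hp : p.Prime)
    (m : ℕ) (hm : m = p ^ s) [NeZero m]
    (C : Submodule (ZMod m) (Fin n → ZMod m)) (nF : ℕ → ℕ)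
    (hn : ∀ i, nF i = (Finset.univ.filter (fun j : Fin n =>
        Submodule.map (LinearMap.proj j) C
          = Submodule.span (ZMod m) {(p : ZMod m) ^ i})).card) :
    ((∑ c ∈ Finset.univ.filter (· ∈ C), (leeWV m n c : ℚ)) / (Nat.card C : ℚ)
        = ∑ i ∈ Finset.range s, (nF i : ℚ) *
            ((∑ a ∈ Finset.univ.filter (· ∈ Ideal.span {(p : ZMod m) ^ i}),
                (leeW m a : ℚ)) / (p : ℚ) ^ (s - i))) ∧
    (Odd p →
      (∑ c ∈ Finset.univ.filter (· ∈ C), (leeWV m n c : ℚ)) / (Nat.card C : ℚ)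
        = (1 / (4 * (p : ℚ) ^ s)) *
            ((p : ℚ) ^ (2 * s) * ((n : ℚ) - (nF s : ℚ))
              - ∑ i ∈ Finset.range s, (p : ℚ) ^ (2 * i) * (nF i : ℚ))) ∧
    (p = 2 →
      (∑ c ∈ Finset.univ.filter (· ∈ C), (leeWV m n c : ℚ)) / (Nat.card C : ℚ)
        = ((2 : ℚ) ^ s / 4) * ((n : ℚ) - (nF s : ℚ))) := by
  subst hm
  have hfirst := sum_leeWV_div_card_eq_sum_range hp C hn
  have hcount := sum_map_proj_eq_sum_range_nsmul hp C hn fun _ => (1 : ℚ)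
  simp only [sum_const, card_univ, Fintype.card_fin, nsmul_eq_mul, mul_one, sum_range_succ]
    at hcount
  refine ⟨hfirst, fun hodd => ?_, fun hp2 => ?_⟩
  · rw [hfirst, hcount, add_sub_cancel_right, mul_sum, ← sum_sub_distrib, mul_sum]
    refine sum_congr rfl fun i hi => ?_
    rw [sum_leeW_span_pow_div (mem_range.1 hi).le, Nat.odd_iff.1 hodd.pow]
    push_cast
    ring
  · subst hp2
    rw [hfirst, hcount, add_sub_cancel_right, mul_sum]
    refine sum_congr rfl fun i hi => ?_
    rw [sum_leeW_span_pow_div (mem_range.1 hi).le,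
      Nat.two_pow_mod_two_eq_zero.2 (Nat.sub_pos_of_lt (mem_range.1 hi))]
    field_simp
    ring

open scoped Classical in
/-- The average Lee weight of a linear code in terms of its support subtype:
`avg(C) = ∑_{i=0}^{s-1} n_i · (average Lee weight of ⟨p^i⟩)`; in particular for `p` odd
it equals `(1/(4p^s))·(p^{2s}(n-n_s) - ∑_{i<s} p^{2i} n_i)`,
and for `p = 2` it equals `2^{s-2}(n-n_s)`. -/
theorem average_lee_weight_code (p s n : ℕ) (hp : p.Prime) (hs : 0 < s)
    (m : ℕ) (hm : m = p ^ s) [NeZero m]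
    (C : Submodule (ZMod m) (Fin n → ZMod m)) (nF : ℕ → ℕ)
    (hn : ∀ i, nF i = (Finset.univ.filter (fun j : Fin n =>
        Submodule.map (LinearMap.proj j) C
          = Submodule.span (ZMod m) {(p : ZMod m) ^ i})).card) :
    ((∑ c ∈ Finset.univ.filter (· ∈ C), (leeWV m n c : ℚ)) / (Nat.card C : ℚ)
        = ∑ i ∈ Finset.range s, (nF i : ℚ) *
            ((∑ a ∈ Finset.univ.filter (· ∈ Ideal.span {(p : ZMod m) ^ i}),
                (leeW m a : ℚ)) / (p : ℚ) ^ (s - i))) ∧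
    (Odd p →
      (∑ c ∈ Finset.univ.filter (· ∈ C), (leeWV m n c : ℚ)) / (Nat.card C : ℚ)
        = (1 / (4 * (p : ℚ) ^ s)) *
            ((p : ℚ) ^ (2 * s) * ((n : ℚ) - (nF s : ℚ))
              - ∑ i ∈ Finset.range s, (p : ℚ) ^ (2 * i) * (nF i : ℚ))) ∧
    (p = 2 →
      (∑ c ∈ Finset.univ.filter (· ∈ C), (leeWV m n c : ℚ)) / (Nat.card C : ℚ)
        = ((2 : ℚ) ^ s / 4) * ((n : ℚ) - (nF s : ℚ))) :=
  average_lee_weight_code_general p s n hp m hm C nF hn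
end

section
/- Let C be a nonzero submodule of (Z/p^sZ)^n and suppose there exists y ∈ C with w_H(y) = d_H(C) and y ∈ ⟨p^{s-ℓ}⟩·(Z/p^sZ)^n for some ℓ ∈ {1,...,s}, where ℓ is the least integer with p^ℓ y = 0. Then d_L(C) ≤ A(p,s,ℓ)·d_H(C), where A(p,s,ℓ) = p^{s-ℓ}(p^ℓ+1)/4 if p is odd and A(2,s,ℓ) = 2^{s-2+ℓ}/(2^ℓ - 1). -/
/-- The minimum Lee distance of a linear code. -/
noncomputable def dLee (m n : ℕ) (C : Submodule (ZMod m) (Fin n → ZMod m)) : ℕ :=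
  sInf {w | ∃ c ∈ C, c ≠ 0 ∧ leeWV m n c = w}

/-- The minimum Hamming distance of a linear code. -/
noncomputable def dHam (m n : ℕ) (C : Submodule (ZMod m) (Fin n → ZMod m)) : ℕ :=
  sInf {w | ∃ c ∈ C, c ≠ 0 ∧ hammingNorm c = w}

/-- The constant `A(p,s,ℓ)`: `p^{s-ℓ}(p^ℓ+1)/4` for `p` odd,
`2^{s-2+ℓ}/(2^ℓ-1)` for `p = 2`. -/
noncomputable def Aps (p s ℓ : ℕ) : ℚ :=
  if p = 2 then (2 : ℚ) ^ (s + ℓ) / (4 * ((2 : ℚ) ^ ℓ - 1))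
  else ((p : ℚ) ^ (s - ℓ) * ((p : ℚ) ^ ℓ + 1)) / 4

open Finset

lemma four_mul_sum_range_min_sub_add_mod (N : ℕ) :
    4 * ∑ i ∈ range N, min i (N - i) + N % 2 = N ^ 2 := by
  induction N using Nat.strong_induction_on with
  | _ N ih =>
    match N with
    | 0 => simp
    | 1 => simp
    | N + 2 =>
      have hshift : ∑ i ∈ range (N + 2), min i (N + 2 - i)
          = ∑ i ∈ range N, min i (N - i) + (N + 1) := by
        rw [sum_range_succ', sum_range_succ]
        have hi : ∀ i ∈ range N, min (i + 1) (N + 2 - (i + 1)) = min i (N - i) + 1 :=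
          fun i hiN => by have := mem_range.1 hiN; omega
        rw [sum_congr rfl hi, sum_add_distrib, sum_const, card_range, smul_eq_mul]
        omega
      have hN := ih N (by omega)
      rw [hshift]
      grind

lemma leeW_natCast (N x : ℕ) : leeW N (x : ZMod N) = min (x % N) (N - x % N) := by
  rw [leeW, ZMod.val_natCast]

lemma leeW_natCast_mul_right (N k x : ℕ) :
    leeW (N * k) ((x * k : ℕ) : ZMod (N * k)) = leeW N (x : ZMod N) * k := by
  rw [leeW_natCast, leeW_natCast, Nat.mul_mod_mul_right, ← Nat.sub_mul, min_mul_mul_right]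

lemma four_mul_sum_leeW_natCast_add_mod (N : ℕ) :
    4 * ∑ t ∈ range N, leeW N (t : ZMod N) + N % 2 = N ^ 2 := by
  rw [← four_mul_sum_range_min_sub_add_mod N]
  congr 2
  refine sum_congr rfl fun t ht => ?_
  rw [leeW_natCast, Nat.mod_eq_of_lt (mem_range.1 ht)]

lemma sum_range_natCast_eq_sum_univ {α : Type*} [AddCommMonoid α] (N : ℕ) [NeZero N]
    (f : ZMod N → α) : ∑ t ∈ range N, f t = ∑ x : ZMod N, f x :=
  sum_nbij' (↑) ZMod.val (fun _ _ => mem_univ _) (fun x _ => mem_range.2 x.val_lt)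
    (fun _ ht => ZMod.val_cast_of_lt (mem_range.1 ht)) (fun x _ => ZMod.natCast_zmod_val x)
    (fun _ _ => rfl)

lemma sum_range_mul_of_periodic {α : Type*} [AddCommMonoid α] {f : ℕ → α} {N : ℕ}
    (hf : Function.Periodic f N) (q : ℕ) :
    ∑ t ∈ range (q * N), f t = q • ∑ t ∈ range N, f t := by
  induction q with
  | zero => simp
  | succ q ih =>
    rw [Nat.succ_mul, sum_range_add, ih, succ_nsmul]
    congr 1
    exact sum_congr rfl fun t _ => by rw [add_comm]; exact hf.nat_mul q t

lemma sum_leeW_natCast_mul_of_coprime {N B : ℕ} [NeZero N] (hB : B.Coprime N) :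
    ∑ t ∈ range N, leeW N ((t * B : ℕ) : ZMod N) = ∑ t ∈ range N, leeW N (t : ZMod N) := by
  simp only [Nat.cast_mul]
  rw [sum_range_natCast_eq_sum_univ N (fun x => leeW N (x * B)),
    sum_range_natCast_eq_sum_univ N (leeW N)]
  exact Equiv.sum_comp (Units.mulRight (ZMod.unitOfCoprime B hB)) (leeW N)

lemma four_mul_sum_leeW_natCast_mul_add_mod_le (N B : ℕ) :
    4 * ∑ t ∈ range N, leeW N ((t * B : ℕ) : ZMod N) + N % 2 ≤ N ^ 2 := by
  induction N using Nat.strong_induction_on generalizing B with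
  | _ N ih =>
    rcases Nat.eq_zero_or_pos N with rfl | hN
    · simp
    have : NeZero N := ⟨hN.ne'⟩
    by_cases hB : B.Coprime N
    · rw [sum_leeW_natCast_mul_of_coprime hB, four_mul_sum_leeW_natCast_add_mod]
    obtain ⟨q, hq, ⟨B', rfl⟩, ⟨N', rfl⟩⟩ := Nat.Prime.not_coprime_iff_dvd.1 hB
    have hN' : N' < q * N' := lt_mul_left (pos_of_mul_pos_right hN q.zero_le) hq.one_lt
    have hper : Function.Periodic (fun t : ℕ => leeW N' ((t * B' : ℕ) : ZMod N')) N' := by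
      intro t
      simp
    have hsum : ∑ t ∈ range (q * N'), leeW (q * N') ((t * (q * B') : ℕ) : ZMod (q * N'))
        = q * (∑ t ∈ range N', leeW N' ((t * B' : ℕ) : ZMod N')) * q := by
      rw [mul_comm q N']
      simp_rw [show ∀ t, t * (q * B') = t * B' * q by intro t; ring, leeW_natCast_mul_right,
        ← sum_mul]
      rw [mul_comm N' q, sum_range_mul_of_periodic hper, smul_eq_mul]
    have hmod : q * N' % 2 ≤ q ^ 2 * (N' % 2) := by
      rcases Nat.mod_two_eq_zero_or_one N' with h | h
      · simp [Nat.mul_mod, h]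
      · have := Nat.mod_lt (q * N') two_pos
        rw [h]
        nlinarith [hq.one_lt]
    rw [hsum]
    calc 4 * (q * (∑ t ∈ range N', leeW N' ((t * B' : ℕ) : ZMod N')) * q) + q * N' % 2
        ≤ q ^ 2 * (4 * ∑ t ∈ range N', leeW N' ((t * B' : ℕ) : ZMod N') + N' % 2) := by
          linarith [hmod]
      _ ≤ q ^ 2 * N' ^ 2 := Nat.mul_le_mul_left _ (ih N' hN' B')
      _ = (q * N') ^ 2 := by ring

lemma four_mul_sum_leeW_mul_add_le {M N k : ℕ} [NeZero M] (hM : M = N * k) {c : ZMod M}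
    (hc : c ∈ Ideal.span {(k : ZMod M)}) :
    4 * ∑ t ∈ range N, leeW M (t * c) + N % 2 * k ≤ N ^ 2 * k := by
  obtain ⟨b, rfl⟩ := Ideal.mem_span_singleton'.1 hc
  have hcast : ∀ t : ℕ, (t : ZMod M) * (b * k) = ((t * b.val * k : ℕ) : ZMod M) := by
    intro t
    push_cast
    rw [ZMod.natCast_zmod_val, mul_assoc]
  subst hM
  simp_rw [hcast, leeW_natCast_mul_right, ← sum_mul]
  have hb := four_mul_sum_leeW_natCast_mul_add_mod_le N b.val
  nlinarith

lemma four_mul_sum_leeWV_smul_add_le {M N k n : ℕ} [NeZero M] (hM : M = N * k)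
    {y : Fin n → ZMod M} (hy : ∀ i, y i ∈ Ideal.span {(k : ZMod M)}) :
    4 * ∑ t ∈ range N, leeWV M n ((t : ZMod M) • y) + hammingNorm y * (N % 2 * k)
      ≤ hammingNorm y * (N ^ 2 * k) := by
  set g : Fin n → ℕ := fun i => ∑ t ∈ range N, leeW M (t * y i)
  have hswap : ∑ t ∈ range N, leeWV M n ((t : ZMod M) • y) = ∑ i with y i ≠ 0, g i := by
    rw [sum_filter_of_ne]
    · exact sum_comm
    · intro i _ hi hyi
      simp [g, hyi, leeW] at hi
  have hcoord : ∀ i, 4 * g i + N % 2 * k ≤ N ^ 2 * k :=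
    fun i => four_mul_sum_leeW_mul_add_le hM (hy i)
  rw [hswap, hammingNorm]
  calc 4 * ∑ i with y i ≠ 0, g i + #{i | y i ≠ 0} * (N % 2 * k)
      = ∑ i with y i ≠ 0, (4 * g i + N % 2 * k) := by
        rw [mul_sum, sum_add_distrib, sum_const, smul_eq_mul]
    _ ≤ ∑ i with y i ≠ 0, N ^ 2 * k := sum_le_sum fun i _ => hcoord i
    _ = #{i | y i ≠ 0} * (N ^ 2 * k) := by rw [sum_const, smul_eq_mul]

lemma dLee_le_leeWV {m n : ℕ} {C : Submodule (ZMod m) (Fin n → ZMod m)} {c : Fin n → ZMod m}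
    (hc : c ∈ C) (hc0 : c ≠ 0) : dLee m n C ≤ leeWV m n c :=
  Nat.sInf_le ⟨c, hc, hc0, rfl⟩

lemma sub_one_mul_dLee_le_sum_leeWV {m n N : ℕ} {C : Submodule (ZMod m) (Fin n → ZMod m)}
    {y : Fin n → ZMod m} (hy : y ∈ C) (hne : ∀ t, t ≠ 0 → t < N → (t : ZMod m) • y ≠ 0) :
    (N - 1) * dLee m n C ≤ ∑ t ∈ range N, leeWV m n ((t : ZMod m) • y) := by
  cases N with
  | zero => simp
  | succ N =>
    rw [sum_range_succ', Nat.add_sub_cancel]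
    calc N * dLee m n C = #(range N) • dLee m n C := by rw [card_range, smul_eq_mul]
      _ ≤ ∑ t ∈ range N, leeWV m n (((t + 1 : ℕ) : ZMod m) • y) :=
        card_nsmul_le_sum _ _ _ fun t ht =>
          dLee_le_leeWV (C.smul_mem _ hy) (hne _ t.succ_ne_zero (by simpa using ht))
      _ ≤ _ := Nat.le_add_right _ _

lemma natCast_smul_ne_zero_of_lt_pow {M : Type*} [AddCommGroup M] {p s ℓ t : ℕ} (hp : p.Prime)
    [Module (ZMod (p ^ s)) M] {y : M} (hy : ∀ k < ℓ, ((p : ZMod (p ^ s)) ^ k) • y ≠ 0)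
    (ht0 : t ≠ 0) (ht : t < p ^ ℓ) : (t : ZMod (p ^ s)) • y ≠ 0 := by
  obtain ⟨e, u, hpu, rfl⟩ := Nat.exists_eq_pow_mul_and_not_dvd ht0 p hp.ne_one
  have he : e < ℓ := by
    refine (Nat.pow_lt_pow_iff_right hp.one_lt).1 (lt_of_le_of_lt ?_ ht)
    exact Nat.le_mul_of_pos_right _ (Nat.pos_of_ne_zero (right_ne_zero_of_mul ht0))
  have hu : IsUnit (u : ZMod (p ^ s)) :=
    (ZMod.unitOfCoprime u ((hp.coprime_iff_not_dvd.2 hpu).symm.pow_right s)).isUnit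
  rw [Nat.cast_mul, mul_comm, mul_smul, Nat.cast_pow]
  exact hu.smul_eq_zero.not.2 (hy e he)

lemma Aps_mul_four_mul_sub_one {p s ℓ : ℕ} (hp : p.Prime) (hℓ : ℓ ≠ 0) (hℓs : ℓ ≤ s) :
    Aps p s ℓ * (4 * ((p : ℚ) ^ ℓ - 1))
      = (((p : ℚ) ^ ℓ) ^ 2 - (p ^ ℓ % 2 : ℕ)) * (p : ℚ) ^ (s - ℓ) := by
  obtain ⟨d, rfl⟩ := Nat.exists_eq_add_of_le hℓs
  have hpℓ : (1 : ℚ) < p ^ ℓ := by exact_mod_cast Nat.one_lt_pow hℓ hp.one_lt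
  rw [Nat.add_sub_cancel_left, Aps]
  split_ifs with h2
  · subst h2
    rw [Nat.pow_mod, Nat.mod_self, zero_pow hℓ, Nat.zero_mod]
    have : (2 : ℚ) ^ ℓ - 1 ≠ 0 := by norm_num at hpℓ; linarith
    field_simp
    ring
  · rw [Nat.odd_iff.1 (hp.odd_of_ne_two h2).pow, Nat.add_sub_cancel_left]
    field_simp
    ring

theorem lee_from_hamming_bound_general (p s n ℓ : ℕ) (hp : p.Prime)
    (m : ℕ) (hm : m = p ^ s)
    (C : Submodule (ZMod m) (Fin n → ZMod m))
    (hℓ1 : 1 ≤ ℓ) (hℓs : ℓ ≤ s)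
    (y : Fin n → ZMod m) (hyC : y ∈ C)
    (hyH : hammingNorm y = dHam m n C)
    (hyI : ∀ j, y j ∈ Ideal.span {(p : ZMod m) ^ (s - ℓ)})
    (hleast : ∀ ℓ' < ℓ, ((p : ZMod m) ^ ℓ') • y ≠ 0) :
    (dLee m n C : ℚ) ≤ Aps p s ℓ * (dHam m n C : ℚ) := by
  subst hm
  have : NeZero (p ^ s) := ⟨pow_ne_zero s hp.ne_zero⟩
  have hsplit : p ^ s = p ^ ℓ * p ^ (s - ℓ) := by rw [← pow_add, Nat.add_sub_cancel' hℓs]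
  have hlower := sub_one_mul_dLee_le_sum_leeWV hyC
    fun t ht0 ht => natCast_smul_ne_zero_of_lt_pow hp hleast ht0 ht
  have hupper := four_mul_sum_leeWV_smul_add_le hsplit (y := y) (by exact_mod_cast hyI)
  have hpℓ : (1 : ℚ) < p ^ ℓ := by exact_mod_cast Nat.one_lt_pow (by omega) hp.one_lt
  have hcomb : ((4 * ((p ^ ℓ - 1) * dLee (p ^ s) n C)
      + dHam (p ^ s) n C * (p ^ ℓ % 2 * p ^ (s - ℓ)) : ℕ) : ℚ)
      ≤ ((dHam (p ^ s) n C * ((p ^ ℓ) ^ 2 * p ^ (s - ℓ)) : ℕ) : ℚ) := by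
    rw [← hyH]
    exact_mod_cast (Nat.add_le_add_right (Nat.mul_le_mul_left 4 hlower) _).trans hupper
  push_cast [Nat.cast_sub (Nat.one_le_pow _ _ hp.pos)] at hcomb
  rw [← mul_le_mul_iff_of_pos_right (by linarith : (0 : ℚ) < 4 * ((p : ℚ) ^ ℓ - 1)),
    mul_right_comm, Aps_mul_four_mul_sub_one hp (by omega) hℓs]
  linarith

/-- If `C` contains a word `y` of minimal Hamming weight with `y ∈ ⟨p^{s-ℓ}⟩` and `ℓ`
the least integer with `p^ℓ y = 0`, then `d_L(C) ≤ A(p,s,ℓ)·d_H(C)`. -/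
theorem lee_from_hamming_bound (p s n ℓ : ℕ) (hp : p.Prime) (hs : 0 < s)
    (m : ℕ) (hm : m = p ^ s) [NeZero m]
    (C : Submodule (ZMod m) (Fin n → ZMod m)) (hC : C ≠ ⊥)
    (hℓ1 : 1 ≤ ℓ) (hℓs : ℓ ≤ s)
    (y : Fin n → ZMod m) (hyC : y ∈ C) (hy0 : y ≠ 0)
    (hyH : hammingNorm y = dHam m n C)
    (hyI : ∀ j, y j ∈ Ideal.span {(p : ZMod m) ^ (s - ℓ)})
    (hkill : ((p : ZMod m) ^ ℓ) • y = 0)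
    (hleast : ∀ ℓ' < ℓ, ((p : ZMod m) ^ ℓ') • y ≠ 0) :
    (dLee m n C : ℚ) ≤ Aps p s ℓ * (dHam m n C : ℚ) :=
  lee_from_hamming_bound_general p s n ℓ hp m hm C hℓ1 hℓs y hyC hyH hyI hleast
end

section
/- Let p be an odd prime and x ∈ F_p^n a nonzero vector such that the cyclic code ⟨x⟩ generated by x is Lee-equidistant (all nonzero multiples λx, λ ∈ F_p \ {0}, have the same Lee weight). Then w_L(x) = (p+1)/4 · w_H(x). -/
open Finset

theorem sum_range_min_sub_two_mul_add_one (m : ℕ) :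
    ∑ v ∈ range (2 * m + 1), min v (2 * m + 1 - v) = m * (m + 1) := by
  have lower : ∑ v ∈ range (m + 1), min v (2 * m + 1 - v) = ∑ v ∈ range (m + 1), v :=
    sum_congr rfl fun v hv => by have := mem_range.mp hv; omega
  have upper : ∑ k ∈ range m, min (m + 1 + k) (2 * m + 1 - (m + 1 + k)) = ∑ v ∈ range (m + 1), v := by
    rw [sum_range_succ', ← sum_range_reflect]
    exact sum_congr rfl fun k hk => by have := mem_range.mp hk; omega
  have gauss := sum_range_id_mul_two (m + 1)
  rw [show range (2 * m + 1) = range ((m + 1) + m) by ring_nf, sum_range_add, lower, upper]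
  rw [Nat.add_sub_cancel] at gauss
  linarith

theorem sum_leeW_eq_sum_range (p : ℕ) [NeZero p] :
    ∑ b : ZMod p, leeW p b = ∑ v ∈ range p, min v (p - v) :=
  sum_nbij' ZMod.val (fun v => (v : ZMod p)) (fun b _ => mem_range.mpr (ZMod.val_lt b))
    (fun _ _ => mem_univ _) (fun b _ => ZMod.natCast_zmod_val b)
    (fun _ hv => ZMod.val_natCast_of_lt (mem_range.mp hv)) fun _ _ => rfl

theorem sum_leeW_two_mul_add_one (m : ℕ) :
    ∑ b : ZMod (2 * m + 1), leeW (2 * m + 1) b = m * (m + 1) := by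
  rw [sum_leeW_eq_sum_range, sum_range_min_sub_two_mul_add_one]

@[simp]
theorem leeW_zero (m : ℕ) : leeW m 0 = 0 := by
  simp [leeW]

theorem sum_leeW_mul_right {p : ℕ} [Fact p.Prime] {a : ZMod p} (ha : a ≠ 0) :
    ∑ lam : ZMod p, leeW p (lam * a) = ∑ b : ZMod p, leeW p b :=
  Fintype.sum_equiv (Equiv.mulRight₀ a ha) _ _ fun _ => rfl

theorem sum_leeWV_smul {p n : ℕ} [Fact p.Prime] (x : Fin n → ZMod p) :
    ∑ lam : ZMod p, leeWV p n (lam • x) = hammingNorm x * ∑ b : ZMod p, leeW p b := by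
  have per_coord (i : Fin n) : ∑ lam : ZMod p, leeW p (lam * x i)
      = if x i ≠ 0 then ∑ b : ZMod p, leeW p b else 0 := by
    split_ifs with h
    · exact sum_leeW_mul_right h
    · simp [not_not.mp h]
  simp only [leeWV, Pi.smul_apply, smul_eq_mul]
  rw [sum_comm, sum_congr rfl fun i _ => per_coord i, sum_ite, sum_const_zero, add_zero,
    sum_const, smul_eq_mul, hammingNorm]

theorem sum_leeWV_smul_of_equidistant {p n : ℕ} [NeZero p] (x : Fin n → ZMod p)
    (hequi : ∀ lam : ZMod p, lam ≠ 0 → leeWV p n (lam • x) = leeWV p n x) :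
    ∑ lam : ZMod p, leeWV p n (lam • x) = (p - 1) * leeWV p n x := by
  have hcard : ({0}ᶜ : Finset (ZMod p)).card = p - 1 := by
    rw [card_compl, ZMod.card, card_singleton]
  rw [Fintype.sum_eq_add_sum_compl 0, sum_congr rfl fun lam hlam => hequi lam (by simpa using hlam),
    sum_const, hcard, smul_eq_mul, zero_smul]
  simp [leeWV]

theorem lee_equidistant_cyclic_weight_general (p n : ℕ) (hp : p.Prime) (hodd : Odd p)
    (x : Fin n → ZMod p)
    (hequi : ∀ lam : ZMod p, lam ≠ 0 → leeWV p n (lam • x) = leeWV p n x) :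
    4 * leeWV p n x = (p + 1) * hammingNorm x := by
  have : Fact p.Prime := ⟨hp⟩
  obtain ⟨m, rfl⟩ := hodd
  have hm_pos : 0 < m := by have := hp.two_le; omega
  have double_count : 2 * m * leeWV _ n x = hammingNorm x * (m * (m + 1)) := by
    rw [← sum_leeW_two_mul_add_one, ← sum_leeWV_smul x, sum_leeWV_smul_of_equidistant x hequi,
      Nat.add_sub_cancel]
  have : 2 * leeWV _ n x = hammingNorm x * (m + 1) :=
    Nat.eq_of_mul_eq_mul_left hm_pos (by linarith)
  linarith

/-- If `p` is an odd prime and the cyclic code `⟨x⟩ ⊆ 𝔽_p^n` is Lee-equidistant,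
then `w_L(x) = ((p+1)/4)·w_H(x)`. -/
theorem lee_equidistant_cyclic_weight (p n : ℕ) (hp : p.Prime) (hodd : Odd p)
    (x : Fin n → ZMod p) (hx : x ≠ 0)
    (hequi : ∀ lam : ZMod p, lam ≠ 0 → leeWV p n (lam • x) = leeWV p n x) :
    4 * leeWV p n x = (p + 1) * hammingNorm x :=
  lee_equidistant_cyclic_weight_general p n hp hodd x hequi
end
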